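/- Let (X,d_0) be a finite metric space, let B ⊆ X be such that B and X∖B are both nonempty, let R > 0, and let d_t (t ∈ [0,1)) be the interpolated distances. Then for all s_1, s_2 ∈ [0,1), d_GH((X,d_{s_1}),(X,d_{s_2})) ≤ (1/2)·|s_2 − s_1|·(diam(X,d_0) + R). -/

import Mathlib

/-- A distance function `d` is a metric. -/
def IsMetric {X : Type*} (d : X → X → ℝ) : Prop :=
  (∀ x y, d x y = d y x) ∧ (∀ x y, d x y = 0 ↔ x = y) ∧ (∀ x y z, d x z ≤ d x y + d y z)

/-- A distance function is an ultrametric: a metric satisfying the strong triangle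
inequality. -/
def IsUltrametricD {X : Type*} (d : X → X → ℝ) : Prop :=
  IsMetric d ∧ ∀ x y z, d x z ≤ max (d x y) (d y z)

/-- The maximum of the consecutive distances along the chain `x :: l ++ [y]`. -/
def chainMax {X : Type*} (d : X → X → ℝ) : X → List X → X → ℝ
  | x, [], y => d x y
  | x, z :: l, y => max (d x z) (chainMax d z l y)

/-- The single-linkage ultrametric: the minimum over all chains from `x` to `y`
of the maximum of the consecutive distances along the chain. -/
noncomputable def uSL {X : Type*} (d : X → X → ℝ) (x y : X) : ℝ :=
  sInf { r | ∃ l : List X, chainMax d x l y = r }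

/-- A correspondence between `X` and `Y`: every point of `X` and every point of `Y`
occurs in some pair. -/
def IsCorr {X Y : Type*} (τ : Set (X × Y)) : Prop :=
  (∀ x, ∃ y, (x, y) ∈ τ) ∧ (∀ y, ∃ x, (x, y) ∈ τ)

/-- The distortion of a correspondence: the supremum of `|d_X(x,x') − d_Y(y,y')|`
over pairs `(x,y), (x',y')` in the correspondence. -/
noncomputable def corrDist {X Y : Type*} (dX : X → X → ℝ) (dY : Y → Y → ℝ)
    (τ : Set (X × Y)) : ℝ :=
  sSup { v | ∃ p ∈ τ, ∃ q ∈ τ, v = |dX p.1 q.1 - dY p.2 q.2| }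

/-- The Gromov–Hausdorff distance: half the infimum over correspondences of their
distortion. -/
noncomputable def ghDist {X Y : Type*} (dX : X → X → ℝ) (dY : Y → Y → ℝ) : ℝ :=
  (1 / 2) * sInf { r | ∃ τ : Set (X × Y), IsCorr τ ∧ corrDist dX dY τ = r }

/-- Single linkage value between two blocks: minimal cross distance. -/
noncomputable def ellSL {X : Type*} (d : X → X → ℝ) (A B : Finset X) : ℝ :=
  sInf { r | ∃ a ∈ A, ∃ b ∈ B, d a b = r }

/-- Complete linkage value between two blocks: maximal cross distance. -/
noncomputable def ellCL {X : Type*} (d : X → X → ℝ) (A B : Finset X) : ℝ :=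
  sSup { r | ∃ a ∈ A, ∃ b ∈ B, d a b = r }

/-- Average linkage value between two blocks: average cross distance. -/
noncomputable def ellAL {X : Type*} (d : X → X → ℝ) (A B : Finset X) : ℝ :=
  (∑ a ∈ A, ∑ b ∈ B, d a b) / (A.card * B.card)

/-- Diameter of a distance function: the supremum of its values. -/
noncomputable def metricDiam {X : Type*} (d : X → X → ℝ) : ℝ :=
  sSup { r | ∃ x y, d x y = r }

open Classical in
/-- The interpolated distance `d_t` of the path `Γ^{B,Bᶜ}_R`:
`d_t(x,y) = (1−t)d₀(x,y)` if `x,y` lie in the same block (`B` or `Bᶜ`), and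
`d_t(x,y) = (1−t)d₀(x,y) + tR` otherwise. -/
noncomputable def dInterp {X : Type*} (d0 : X → X → ℝ) (B : Set X) (R t : ℝ)
    (x y : X) : ℝ :=
  if x ∈ B ↔ y ∈ B then (1 - t) * d0 x y else (1 - t) * d0 x y + t * R

/-! The identity correspondence already witnesses the bound: `d_{s₁} - d_{s₂}` equals
`(s₂ - s₁) d₀` within a block and `(s₂ - s₁)(d₀ - R)` across blocks, and both are at most
`|s₂ - s₁| (diam d₀ + R)` in absolute value. -/

theorem IsMetric.nonneg {X : Type*} {d : X → X → ℝ} (hd : IsMetric d) (x y : X) :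
    0 ≤ d x y := by
  obtain ⟨hsymm, hzero, htri⟩ := hd
  have h := htri x y x
  rw [(hzero x x).mpr rfl, hsymm y x] at h
  linarith

theorem le_metricDiam {X : Type*} [Finite X] (d : X → X → ℝ) (x y : X) :
    d x y ≤ metricDiam d := by
  have hbdd : BddAbove { r | ∃ x y, d x y = r } := by
    have hrange : { r | ∃ x y, d x y = r } = Set.range (fun p : X × X => d p.1 p.2) := by
      ext r
      simp [Prod.exists]
    rw [hrange]
    exact (Set.finite_range _).bddAbove
  exact le_csSup hbdd ⟨x, y, rfl⟩

theorem metricDiam_nonneg {X : Type*} {d : X → X → ℝ} (hd : IsMetric d) : 0 ≤ metricDiam d :=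
  Real.sSup_nonneg fun _ ⟨x, y, hxy⟩ => hxy ▸ hd.nonneg x y

section GromovHausdorff

variable {X Y : Type*} {dX : X → X → ℝ} {dY : Y → Y → ℝ}

theorem corrDist_nonneg (τ : Set (X × Y)) : 0 ≤ corrDist dX dY τ :=
  Real.sSup_nonneg fun _ ⟨_, _, _, _, hv⟩ => hv ▸ abs_nonneg _

theorem ghDist_le_of_isCorr {τ : Set (X × Y)} (hτ : IsCorr τ) :
    ghDist dX dY ≤ 1 / 2 * corrDist dX dY τ := by
  have hbdd : BddBelow { r | ∃ τ : Set (X × Y), IsCorr τ ∧ corrDist dX dY τ = r } :=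
    ⟨0, fun _ ⟨τ', _, hr⟩ => hr ▸ corrDist_nonneg τ'⟩
  unfold ghDist
  gcongr
  exact csInf_le hbdd ⟨τ, hτ, rfl⟩

theorem isCorr_diagonal : IsCorr (Set.diagonal X) :=
  ⟨fun x => ⟨x, rfl⟩, fun y => ⟨y, rfl⟩⟩

theorem ghDist_le_of_abs_sub_le {d d' : X → X → ℝ} {C : ℝ} (hC : 0 ≤ C)
    (h : ∀ x y, |d x y - d' x y| ≤ C) : ghDist d d' ≤ 1 / 2 * C := by
  have hdiag : corrDist d d' (Set.diagonal X) ≤ C := by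
    refine Real.sSup_le ?_ hC
    rintro v ⟨⟨x, x'⟩, rfl : x = x', ⟨y, y'⟩, rfl : y = y', rfl⟩
    exact h x y
  calc ghDist d d' ≤ 1 / 2 * corrDist d d' (Set.diagonal X) :=
        ghDist_le_of_isCorr isCorr_diagonal
    _ ≤ 1 / 2 * C := by gcongr

end GromovHausdorff

theorem abs_dInterp_sub_dInterp_le {X : Type*} {d0 : X → X → ℝ} {B : Set X} {R D : ℝ}
    {x y : X} (h0 : 0 ≤ d0 x y) (hD : d0 x y ≤ D) (hR : 0 ≤ R) (s1 s2 : ℝ) :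
    |dInterp d0 B R s1 x y - dInterp d0 B R s2 x y| ≤ |s2 - s1| * (D + R) := by
  unfold dInterp
  split_ifs
  · calc |(1 - s1) * d0 x y - (1 - s2) * d0 x y| = |(s2 - s1) * d0 x y| := by ring_nf
      _ = |s2 - s1| * d0 x y := by rw [abs_mul, abs_of_nonneg h0]
      _ ≤ |s2 - s1| * (D + R) := by gcongr; linarith
  · calc |(1 - s1) * d0 x y + s1 * R - ((1 - s2) * d0 x y + s2 * R)|
          = |(s2 - s1) * (d0 x y - R)| := by ring_nf
      _ = |s2 - s1| * |d0 x y - R| := abs_mul _ _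
      _ ≤ |s2 - s1| * (D + R) := by gcongr; rw [abs_le]; constructor <;> linarith

theorem stmt8_general {X : Type*} [Fintype X] (d0 : X → X → ℝ) (hd0 : IsMetric d0)
    (B : Set X) (R : ℝ) (hR : 0 < R)
    (s1 s2 : ℝ) :
    ghDist (dInterp d0 B R s1) (dInterp d0 B R s2) ≤
      (1 / 2) * |s2 - s1| * (metricDiam d0 + R) := by
  have hC : 0 ≤ |s2 - s1| * (metricDiam d0 + R) :=
    mul_nonneg (abs_nonneg _) (by linarith [metricDiam_nonneg hd0])
  calc ghDist (dInterp d0 B R s1) (dInterp d0 B R s2)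
      ≤ 1 / 2 * (|s2 - s1| * (metricDiam d0 + R)) :=
        ghDist_le_of_abs_sub_le hC fun x y =>
          abs_dInterp_sub_dInterp_le (hd0.nonneg x y) (le_metricDiam d0 x y) hR.le s1 s2
    _ = 1 / 2 * |s2 - s1| * (metricDiam d0 + R) := by ring

/-- along the interpolation `Γ^{B,Bᶜ}_R`, the Gromov–Hausdorff distance
between `(X,d_{s₁})` and `(X,d_{s₂})` is at most `½|s₂−s₁|(diam(X,d₀)+R)`. -/
theorem stmt8 {X : Type*} [Fintype X] [Nonempty X] (d0 : X → X → ℝ) (hd0 : IsMetric d0)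
    (B : Set X) (hB : B.Nonempty) (hBc : Bᶜ.Nonempty) (R : ℝ) (hR : 0 < R)
    (s1 s2 : ℝ) (hs1 : s1 ∈ Set.Ico (0 : ℝ) 1) (hs2 : s2 ∈ Set.Ico (0 : ℝ) 1) :
    ghDist (dInterp d0 B R s1) (dInterp d0 B R s2) ≤
      (1 / 2) * |s2 - s1| * (metricDiam d0 + R) :=
  stmt8_general d0 hd0 B R hR s1 s2
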